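/- arXiv:1611.10027 — 5 statements merged into one kernel-verified Lean document; each statement's English description precedes it below -/
import Mathlib

section
/- Let B be a matrix in SL(2,ℝ) and x a unit vector in ℝ². Then max{‖B²x‖, ‖Bx‖, ‖B⁻¹x‖} ≥ 1/4. -/
lemma cayley2 (M : Matrix (Fin 2) (Fin 2) ℝ) (h : M.det = 1) :
    M * M = (M.trace) • M - 1 := by
  rw [Matrix.det_fin_two] at h
  ext i j
  fin_cases i <;> fin_cases j <;>
    simp [Matrix.mul_apply, Fin.sum_univ_two, Matrix.trace_fin_two, Matrix.one_apply] <;>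
    nlinarith [h]

/-- Let `B ∈ SL(2,ℝ)` and `x` a unit vector in `ℝ²`. Then
`max {‖B²x‖, ‖Bx‖, ‖B⁻¹x‖} ≥ 1/4`. -/
theorem stmt0 (B : Matrix.SpecialLinearGroup (Fin 2) ℝ) (x : EuclideanSpace ℝ (Fin 2))
    (hx : ‖x‖ = 1) :
    (1 / 4 : ℝ) ≤
      max ‖(EuclideanSpace.equiv (Fin 2) ℝ).symm
            (((B * B : Matrix.SpecialLinearGroup (Fin 2) ℝ) : Matrix (Fin 2) (Fin 2) ℝ).mulVec x)‖
        (max ‖(EuclideanSpace.equiv (Fin 2) ℝ).symm ((B : Matrix (Fin 2) (Fin 2) ℝ).mulVec x)‖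
          ‖(EuclideanSpace.equiv (Fin 2) ℝ).symm
            (((B⁻¹ : Matrix.SpecialLinearGroup (Fin 2) ℝ) : Matrix (Fin 2) (Fin 2) ℝ).mulVec x)‖) := by
  set M : Matrix (Fin 2) (Fin 2) ℝ := (B : Matrix (Fin 2) (Fin 2) ℝ) with hM
  set t : ℝ := M.trace with ht
  have hdet : M.det = 1 := B.2
  have hCH : M * M = t • M - 1 := cayley2 M hdet
  -- inverse identity
  have hNmul : ((B⁻¹ : Matrix.SpecialLinearGroup (Fin 2) ℝ) : Matrix (Fin 2) (Fin 2) ℝ) * M = 1 := by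
    rw [hM, ← Matrix.SpecialLinearGroup.coe_mul, inv_mul_cancel,
      Matrix.SpecialLinearGroup.coe_one]
  have hInv : ((B⁻¹ : Matrix.SpecialLinearGroup (Fin 2) ℝ) : Matrix (Fin 2) (Fin 2) ℝ)
      = t • (1 : Matrix (Fin 2) (Fin 2) ℝ) - M := by
    have hBmul : M * (t • (1 : Matrix (Fin 2) (Fin 2) ℝ) - M) = 1 := by
      rw [Matrix.mul_sub, hCH]
      simp [Matrix.mul_smul]
    calc ((B⁻¹ : Matrix.SpecialLinearGroup (Fin 2) ℝ) : Matrix (Fin 2) (Fin 2) ℝ)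
        = ((B⁻¹ : Matrix.SpecialLinearGroup (Fin 2) ℝ) : Matrix (Fin 2) (Fin 2) ℝ) *
          (M * (t • (1 : Matrix (Fin 2) (Fin 2) ℝ) - M)) := by rw [hBmul, Matrix.mul_one]
      _ = (((B⁻¹ : Matrix.SpecialLinearGroup (Fin 2) ℝ) : Matrix (Fin 2) (Fin 2) ℝ) * M) *
          (t • (1 : Matrix (Fin 2) (Fin 2) ℝ) - M) := by rw [Matrix.mul_assoc]
      _ = t • (1 : Matrix (Fin 2) (Fin 2) ℝ) - M := by rw [hNmul, Matrix.one_mul]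
  set e := (EuclideanSpace.equiv (Fin 2) ℝ).symm with he
  set y : EuclideanSpace ℝ (Fin 2) := e (M.mulVec x) with hy
  have hx2 : ((B * B : Matrix.SpecialLinearGroup (Fin 2) ℝ) : Matrix (Fin 2) (Fin 2) ℝ).mulVec x
      = (t • M - 1).mulVec x := by
    rw [Matrix.SpecialLinearGroup.coe_mul, ← hM, hCH]
  have key2 : e (((B * B : Matrix.SpecialLinearGroup (Fin 2) ℝ) : Matrix (Fin 2) (Fin 2) ℝ).mulVec x)
      = t • y - x := by
    rw [hx2, Matrix.sub_mulVec, Matrix.smul_mulVec, Matrix.one_mulVec, map_sub,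
      map_smul, ← hy]
    rfl
  have keyInv : e (((B⁻¹ : Matrix.SpecialLinearGroup (Fin 2) ℝ) : Matrix (Fin 2) (Fin 2) ℝ).mulVec x)
      = t • x - y := by
    rw [hInv, Matrix.sub_mulVec, Matrix.smul_mulVec, Matrix.one_mulVec, map_sub,
      map_smul, ← hy]
    rfl
  by_contra hcon
  push_neg at hcon
  have h1 : ‖t • y - x‖ < 1/4 := by rw [← key2]; exact lt_of_le_of_lt (le_max_left _ _) hcon
  have h2 : ‖y‖ < 1/4 := lt_of_le_of_lt (le_max_left _ _) (lt_of_le_of_lt (le_max_right _ _) hcon)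
  have h3 : ‖t • x - y‖ < 1/4 := by
    rw [← keyInv]
    exact lt_of_le_of_lt (le_max_right _ _) (lt_of_le_of_lt (le_max_right _ _) hcon)
  have ht1 : |t| ≤ ‖t • x - y‖ + ‖y‖ := by
    calc |t| = ‖t • x‖ := by rw [norm_smul, hx, mul_one]; rfl
    _ = ‖(t • x - y) + y‖ := by rw [sub_add_cancel]
    _ ≤ ‖t • x - y‖ + ‖y‖ := norm_add_le _ _
  have ht2 : |t| < 1/2 := by linarith
  have hone : (1:ℝ) ≤ |t| * ‖y‖ + ‖t • y - x‖ := by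
    calc (1:ℝ) = ‖x‖ := hx.symm
    _ = ‖t • y - (t • y - x)‖ := by rw [sub_sub_cancel]
    _ ≤ ‖t • y‖ + ‖t • y - x‖ := norm_sub_le _ _
    _ = |t| * ‖y‖ + ‖t • y - x‖ := by rw [norm_smul]; rfl
  nlinarith [norm_nonneg y, abs_nonneg t, norm_nonneg (t • y - x)]
end

section
/- Let A¹,…,Aⁿ and B¹,…,Bⁿ be 2×2 real matrices such that for every 1 ≤ j ≤ n and 0 ≤ ℓ ≤ n−j, ‖A^{j+ℓ−1}···A^{j+1}A^j‖ ≤ C e^{dℓ} (products of ℓ consecutive A's starting at index j). Then ‖(Aⁿ+Bⁿ)···(A¹+B¹) − Aⁿ···A¹‖ ≤ C e^{dn} (∏_{j=1}^n (1 + C e^{−d}‖B^j‖) − 1). -/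
open scoped Matrix.Norms.L2Operator

/-!
Write `Pₘ = (Aₘ+Bₘ)⋯(A₁+B₁)` and `Qₘ = Aₘ⋯A₁`. Since `Pₘ₊₁ - Qₘ₊₁ = Aₘ₊₁ (Pₘ - Qₘ) + Bₘ₊₁ Pₘ`,
one proves by induction on `m` the stronger bound
`‖Aₘ₊ₜ⋯Aₘ₊₁ (Pₘ - Qₘ)‖ ≤ C e^{d(m+t)} (∏_{j ≤ m} (1 + C e^{-d} ‖Bʲ‖) - 1)` for all `t`:
the first term is the case `(m, t + 1)`, and the second is controlled using
`‖Pₘ‖ ≤ ‖Qₘ‖ + ‖Pₘ - Qₘ‖ ≤ C e^{dm} ∏_{j ≤ m} (1 + C e^{-d} ‖Bʲ‖)`.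
-/

open Real

section NormedRing

variable {R : Type*} [NormedRing R]

/-- `descProd f j ℓ = f (j + ℓ - 1) * ⋯ * f (j + 1) * f j`. -/
def descProd (f : ℕ → R) (j ℓ : ℕ) : R :=
  ((List.range ℓ).reverse.map (fun i => f (j + i))).prod

@[simp]
lemma descProd_zero (f : ℕ → R) (j : ℕ) : descProd f j 0 = 1 := rfl

lemma descProd_succ (f : ℕ → R) (j ℓ : ℕ) :
    descProd f j (ℓ + 1) = f (j + ℓ) * descProd f j ℓ := by
  simp [descProd, List.range_succ]

lemma descProd_succ' (f : ℕ → R) (j ℓ : ℕ) :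
    descProd f j (ℓ + 1) = descProd f (j + 1) ℓ * f j := by
  simp [descProd, List.range_succ_eq_map, Function.comp_def, add_assoc, add_comm 1]

variable (A B : ℕ → R) (C d : ℝ)

noncomputable def perturbationFactor (m : ℕ) : ℝ :=
  ((List.range m).map (fun j => 1 + C * exp (-d) * ‖B j‖)).prod

lemma perturbationFactor_succ (m : ℕ) :
    perturbationFactor B C d (m + 1) =
      perturbationFactor B C d m * (1 + C * exp (-d) * ‖B m‖) :=
  List.prod_range_succ _ m

variable {A B C d} {N : ℕ}
  (hA : ∀ j ℓ : ℕ, j + ℓ ≤ N → ‖descProd A j ℓ‖ ≤ C * exp (d * ℓ))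
include hA

lemma norm_descProd_mul_sub_le {m t : ℕ} (hmt : m + t ≤ N) :
    ‖descProd A m t * (descProd (A + B) 0 m - descProd A 0 m)‖ ≤
      C * exp (d * ↑(m + t)) * (perturbationFactor B C d m - 1) := by
  induction m generalizing t with
  | zero => simp [perturbationFactor]
  | succ m ih =>
    set P := descProd (A + B) 0 m
    set Q := descProd A 0 m
    set S := perturbationFactor B C d m
    have hsplit : descProd A (m + 1) t * (descProd (A + B) 0 (m + 1) - descProd A 0 (m + 1)) =
        descProd A m (t + 1) * (P - Q) + descProd A (m + 1) t * (B m * P) := by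
      simp only [descProd_succ _ 0, descProd_succ' A m, zero_add, Pi.add_apply, P, Q]
      noncomm_ring
    have hPQ : ‖P - Q‖ ≤ C * exp (d * m) * (S - 1) := by
      simpa using ih (t := 0) (by omega)
    have hP : ‖P‖ ≤ C * exp (d * m) * S :=
      calc ‖P‖ ≤ ‖Q‖ + ‖P - Q‖ := norm_le_norm_add_norm_sub' P Q
        _ ≤ C * exp (d * m) + C * exp (d * m) * (S - 1) :=
          add_le_add (by simpa using hA 0 m (by omega)) hPQ
        _ = C * exp (d * m) * S := by ring
    have hT : ‖descProd A (m + 1) t‖ ≤ C * exp (d * t) := hA (m + 1) t (by omega)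
    have hexp : exp (d * m) * exp (d * t) = exp (d * ↑(m + 1 + t)) * exp (-d) := by
      rw [← exp_add, ← exp_add]; push_cast; ring_nf
    have hhead : ‖descProd A m (t + 1) * (P - Q)‖ ≤ C * exp (d * ↑(m + 1 + t)) * (S - 1) := by
      rw [Nat.add_right_comm m 1 t]
      exact ih (by omega)
    calc _ ≤ C * exp (d * ↑(m + 1 + t)) * (S - 1) +
          C * exp (d * t) * (‖B m‖ * (C * exp (d * m) * S)) := by
          rw [hsplit]
          refine (norm_add_le _ _).trans (add_le_add hhead ?_)
          refine (norm_mul_le _ _).trans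
            (mul_le_mul hT ?_ (norm_nonneg _) ((norm_nonneg _).trans hT))
          exact (norm_mul_le _ _).trans (mul_le_mul_of_nonneg_left hP (norm_nonneg _))
      _ = _ := by
          rw [perturbationFactor_succ]
          linear_combination C * C * ‖B m‖ * S * hexp

theorem norm_descProd_add_sub_le :
    ‖descProd (A + B) 0 N - descProd A 0 N‖ ≤
      C * exp (d * N) * (perturbationFactor B C d N - 1) := by
  simpa using norm_descProd_mul_sub_le hA (le_refl (N + 0))

end NormedRing

theorem stmt1_general (n : ℕ) (A B : ℕ → Matrix (Fin 2) (Fin 2) ℝ) (C d : ℝ)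
    (hA : ∀ j ℓ : ℕ, 1 ≤ j → j + ℓ ≤ n + 1 →
      ‖((List.range ℓ).reverse.map (fun i => A (j + i))).prod‖ ≤ C * Real.exp (d * ℓ)) :
    ‖((List.range n).reverse.map (fun j => A (j + 1) + B (j + 1))).prod -
        ((List.range n).reverse.map (fun j => A (j + 1))).prod‖ ≤
      C * Real.exp (d * n) *
        (((List.range n).map (fun j => 1 + C * Real.exp (-d) * ‖B (j + 1)‖)).prod - 1) := by
  have hA' : ∀ j ℓ : ℕ, j + ℓ ≤ n →
      ‖descProd (fun i => A (i + 1)) j ℓ‖ ≤ C * exp (d * ℓ) := fun j ℓ h => by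
    simpa [descProd, Nat.add_right_comm j _ 1] using hA (j + 1) ℓ (by omega) (by omega)
  simpa [descProd, perturbationFactor] using
    norm_descProd_add_sub_le (B := fun i => B (i + 1)) hA'

/-- Gordon-type perturbation lemma for products of 2×2 matrices (Simon):
if all products of `ℓ` consecutive `A`'s starting at index `j` (indices `1,…,n`) satisfy
`‖A^{j+ℓ-1} ⋯ A^j‖ ≤ C e^{dℓ}`, then
`‖(Aⁿ+Bⁿ)⋯(A¹+B¹) − Aⁿ⋯A¹‖ ≤ C e^{dn} (∏_{j=1}^n (1 + C e^{-d} ‖B^j‖) − 1)`. -/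
theorem stmt1 (n : ℕ) (A B : ℕ → Matrix (Fin 2) (Fin 2) ℝ) (C d : ℝ) (hC : 0 < C)
    (hA : ∀ j ℓ : ℕ, 1 ≤ j → j + ℓ ≤ n + 1 →
      ‖((List.range ℓ).reverse.map (fun i => A (j + i))).prod‖ ≤ C * Real.exp (d * ℓ)) :
    ‖((List.range n).reverse.map (fun j => A (j + 1) + B (j + 1))).prod -
        ((List.range n).reverse.map (fun j => A (j + 1))).prod‖ ≤
      C * Real.exp (d * n) *
        (((List.range n).map (fun j => 1 + C * Real.exp (-d) * ‖B (j + 1)‖)).prod - 1) :=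
  stmt1_general n A B C d hA
end

section
/- Let (qₙ) be a strictly increasing sequence of positive integers and θ ∈ ℝ. Then the set {a ∈ [0,1] : ‖qₙ(a−θ)‖_{ℝ/ℤ} → 0 as n → ∞} has Lebesgue measure zero. -/
/-!
For `Q ≠ 0` the map `a ↦ Q (a - θ) mod 1` pushes Lebesgue measure on `[0, 1]` forward to Haar
measure on `ℝ/ℤ`, so `{a ∈ [0, 1] : ‖qₙ (a - θ)‖ ≤ ε}` has measure at most `2ε` for every `n`.
A point where `‖qₙ (a - θ)‖ → 0` lies in all but finitely many of these sets, hence the set of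
such points has measure at most `2ε` for every `ε > 0`.
-/

/-- Distance from a real number to the nearest integer, `‖x‖_{ℝ/ℤ} = min_{ℓ ∈ ℤ} |x − ℓ|`. -/
noncomputable def distToInt (x : ℝ) : ℝ := ‖(x : UnitAddCircle)‖

open MeasureTheory Filter Set Topology

theorem UnitAddCircle.measurePreserving_coe_mul_sub {Q : ℤ} (hQ : Q ≠ 0) (θ t : ℝ) :
    MeasurePreserving (fun a : ℝ => ((Q * (a - θ) : ℝ) : UnitAddCircle))
      (volume.restrict (Ioc t (t + 1))) volume := by
  convert (measurePreserving_sub_right volume ((Q * θ : ℝ) : UnitAddCircle)).comp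
    (Measure.MeasurePreserving.zsmul volume hQ (UnitAddCircle.measurePreserving_mk t)) using 1
  ext a
  simp [mul_sub]

theorem volume_setOf_distToInt_mul_sub_le {Q : ℤ} (hQ : Q ≠ 0) (θ ε : ℝ) :
    volume {a ∈ Icc (0 : ℝ) 1 | distToInt (Q * (a - θ)) ≤ ε} = ENNReal.ofReal (min 1 (2 * ε)) :=
  calc volume {a ∈ Icc (0 : ℝ) 1 | distToInt (Q * (a - θ)) ≤ ε}
      = volume.restrict (Ioc 0 (0 + 1))
          ((fun a : ℝ => ((Q * (a - θ) : ℝ) : UnitAddCircle)) ⁻¹' Metric.closedBall 0 ε) := by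
        rw [zero_add, Measure.restrict_congr_set Ioc_ae_eq_Icc,
          Measure.restrict_apply' measurableSet_Icc, inter_comm]
        congr 1
        ext a
        simp only [mem_ofPred_eq, mem_inter_iff, mem_preimage, mem_closedBall_zero_iff, distToInt]
    _ = volume (Metric.closedBall (0 : UnitAddCircle) ε) :=
        (UnitAddCircle.measurePreserving_coe_mul_sub hQ θ 0).measure_preimage
          measurableSet_closedBall.nullMeasurableSet
    _ = ENNReal.ofReal (min 1 (2 * ε)) := AddCircle.volume_closedBall 1 ε

theorem measure_setOf_eventually_mem_le {α : Type*} [MeasurableSpace α] (μ : Measure α)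
    (s : ℕ → Set α) {c : ENNReal} (h : ∀ n, μ (s n) ≤ c) :
    μ {a | ∀ᶠ n in atTop, a ∈ s n} ≤ c := by
  have hmono : Monotone fun N => ⋂ n ≥ N, s n := fun N M hNM =>
    biInter_mono (fun n hn => le_trans hNM hn) fun _ _ => subset_rfl
  calc μ {a | ∀ᶠ n in atTop, a ∈ s n} = μ (⋃ N, ⋂ n ≥ N, s n) := by
        congr 1; ext a; simp [eventually_atTop]
    _ = ⨆ N, μ (⋂ n ≥ N, s n) := hmono.measure_iUnion
    _ ≤ c := iSup_le fun N => (measure_mono (biInter_subset_of_mem le_rfl)).trans (h N)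

theorem stmt4_general (q : ℕ → ℕ) (hpos : ∀ n, 0 < q n) (θ : ℝ) :
    MeasureTheory.volume
      {a ∈ Set.Icc (0:ℝ) 1 |
        Filter.Tendsto (fun n => distToInt (q n * (a - θ))) Filter.atTop (nhds 0)} = 0 := by
  set A := {a ∈ Icc (0 : ℝ) 1 | Tendsto (fun n => distToInt (q n * (a - θ))) atTop (𝓝 0)}
  have hA : ∀ ε > 0, volume A ≤ ENNReal.ofReal (2 * ε) := by
    intro ε hε
    let E n := {a ∈ Icc (0 : ℝ) 1 | distToInt (q n * (a - θ)) ≤ ε}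
    have hAE : A ⊆ {a | ∀ᶠ n in atTop, a ∈ E n} := fun a ⟨ha, htend⟩ =>
      (htend.eventually (eventually_le_nhds hε)).mono fun _ hn => ⟨ha, hn⟩
    refine (measure_mono hAE).trans (measure_setOf_eventually_mem_le _ _ fun n => ?_)
    have hE := volume_setOf_distToInt_mul_sub_le (Int.natCast_ne_zero.mpr (hpos n).ne') θ ε
    push_cast at hE
    exact hE.le.trans (ENNReal.ofReal_le_ofReal (min_le_right _ _))
  have hlim : Tendsto (fun ε : ℝ => ENNReal.ofReal (2 * ε)) (𝓝[>] 0) (𝓝 0) := by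
    simpa using (ENNReal.tendsto_ofReal (tendsto_id.const_mul 2)).mono_left
      (nhdsWithin_le_nhds (a := (0 : ℝ)))
  exact nonpos_iff_eq_zero.mp (ge_of_tendsto hlim (eventually_nhdsWithin_of_forall hA))

/-- If `(qₙ)` is a strictly increasing sequence of positive integers and `θ ∈ ℝ`, then
`{a ∈ [0,1] : ‖qₙ(a − θ)‖_{ℝ/ℤ} → 0}` has Lebesgue measure zero. -/
theorem stmt4 (q : ℕ → ℕ) (hmono : StrictMono q) (hpos : ∀ n, 0 < q n) (θ : ℝ) :
    MeasureTheory.volume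
      {a ∈ Set.Icc (0:ℝ) 1 |
        Filter.Tendsto (fun n => distToInt (q n * (a - θ))) Filter.atTop (nhds 0)} = 0 :=
  stmt4_general q hpos θ
end

section
/- For λ > 0, let A∞ = [[e − iλ, −1],[1, 0]] ∈ M₂(ℂ). Then √((2+e)²+λ²) + √((2−e)²+λ²) > 4, and the spectral radius of A∞ equals e^{γ}, where γ > 0 is defined by 4 cosh γ = √((2+e)²+λ²) + √((2−e)²+λ²). -/
/-- The inverse hyperbolic cosine on `[1, ∞)`: `arcosh x = ln (x + √(x² − 1))`. -/
noncomputable def arcoshR (x : ℝ) : ℝ := Real.log (x + Real.sqrt (x ^ 2 - 1))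

lemma cosh_arcoshR {x : ℝ} (hx : 1 ≤ x) : Real.cosh (arcoshR x) = x := by
  have hs0 : 0 ≤ x ^ 2 - 1 := by nlinarith
  have hs : Real.sqrt (x ^ 2 - 1) ^ 2 = x ^ 2 - 1 := Real.sq_sqrt hs0
  have hsn : 0 ≤ Real.sqrt (x ^ 2 - 1) := Real.sqrt_nonneg _
  have hy : 0 < x + Real.sqrt (x ^ 2 - 1) := by nlinarith
  have hinv : (x + Real.sqrt (x ^ 2 - 1))⁻¹ = x - Real.sqrt (x ^ 2 - 1) := by
    rw [inv_eq_iff_eq_inv, eq_comm, inv_eq_iff_eq_inv]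
    · field_simp
      nlinarith
  rw [arcoshR, Real.cosh_eq, Real.exp_log hy, ← Real.log_inv, Real.exp_log (by positivity),
    hinv]
  ring

lemma normc_sq (w : ℂ) : ‖w‖ ^ 2 = w.re ^ 2 + w.im ^ 2 := by
  rw [Complex.sq_norm, Complex.normSq_apply]; ring

lemma parallelogramC (z w : ℂ) : ‖z + w‖ ^ 2 + ‖z - w‖ ^ 2 = 2 * ‖z‖ ^ 2 + 2 * ‖w‖ ^ 2 := by
  simp only [normc_sq, Complex.add_re, Complex.add_im, Complex.sub_re, Complex.sub_im]; ring

lemma spec_eq (b z₁ z₂ : ℂ) (hsum : z₁ + z₂ = b) (hprod : z₁ * z₂ = 1) :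
    spectrum ℂ (!![b, -1; 1, 0]) = {z₁, z₂} := by
  ext z
  rw [spectrum.mem_iff]
  have hM : (algebraMap ℂ (Matrix (Fin 2) (Fin 2) ℂ)) z - !![b, -1; 1, 0]
      = !![z - b, 1; -1, z] := by
    rw [Algebra.algebraMap_eq_smul_one]
    ext i j
    fin_cases i <;> fin_cases j <;> simp [Matrix.one_apply]
  rw [hM, Matrix.isUnit_iff_isUnit_det, Matrix.det_fin_two_of, isUnit_iff_ne_zero, not_not]
  have : (z - b) * z - 1 * (-1) = (z - z₁) * (z - z₂) := by
    rw [← hsum]; linear_combination -hprod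
  rw [this, mul_eq_zero, sub_eq_zero, sub_eq_zero]
  simp [Set.mem_insert_iff]

lemma sr_eq (b z₁ z₂ : ℂ) (hsum : z₁ + z₂ = b) (hprod : z₁ * z₂ = 1)
    (hle : ‖z₂‖ ≤ ‖z₁‖) :
    spectralRadius ℂ (!![b, -1; 1, 0]) = ENNReal.ofReal ‖z₁‖ := by
  rw [spectralRadius, spec_eq b z₁ z₂ hsum hprod]
  rw [show ({z₁, z₂} : Set ℂ) = insert z₁ {z₂} from rfl, iSup_insert, iSup_singleton,
    ofReal_norm, enorm_eq_nnnorm]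
  rw [sup_eq_left]
  exact_mod_cast hle

set_option maxHeartbeats 1000000

/-- For `λ > 0`, the matrix `A∞ = [[e − iλ, −1],[1, 0]]` has spectral radius `e^γ`, where `γ`
satisfies `4 cosh γ = √((2+e)² + λ²) + √((2−e)² + λ²) > 4`. -/
theorem stmt15 (e lam : ℝ) (hlam : 0 < lam) :
    4 < Real.sqrt ((2 + e) ^ 2 + lam ^ 2) + Real.sqrt ((2 - e) ^ 2 + lam ^ 2) ∧
    4 * Real.cosh (arcoshR ((Real.sqrt ((2 + e) ^ 2 + lam ^ 2) +
          Real.sqrt ((2 - e) ^ 2 + lam ^ 2)) / 4)) =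
        Real.sqrt ((2 + e) ^ 2 + lam ^ 2) + Real.sqrt ((2 - e) ^ 2 + lam ^ 2) ∧
    spectralRadius ℂ (!![(e : ℂ) - Complex.I * lam, -1; 1, 0]) =
      ENNReal.ofReal (Real.exp (arcoshR ((Real.sqrt ((2 + e) ^ 2 + lam ^ 2) +
        Real.sqrt ((2 - e) ^ 2 + lam ^ 2)) / 4))) := by
  set P := Real.sqrt ((2 + e) ^ 2 + lam ^ 2) with hPdef
  set Q := Real.sqrt ((2 - e) ^ 2 + lam ^ 2) with hQdef
  have hP0 : 0 ≤ P := Real.sqrt_nonneg _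
  have hQ0 : 0 ≤ Q := Real.sqrt_nonneg _
  have hP2 : P ^ 2 = (2 + e) ^ 2 + lam ^ 2 := Real.sq_sqrt (by positivity)
  have hQ2 : Q ^ 2 = (2 - e) ^ 2 + lam ^ 2 := Real.sq_sqrt (by positivity)
  have h1 : |2 + e| < P := by
    rw [← Real.sqrt_sq_eq_abs]; exact Real.sqrt_lt_sqrt (sq_nonneg _) (by nlinarith)
  have h2 : |2 - e| < Q := by
    rw [← Real.sqrt_sq_eq_abs]; exact Real.sqrt_lt_sqrt (sq_nonneg _) (by nlinarith)
  have hS : 4 < P + Q := by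
    have := le_abs_self (2 + e); have := le_abs_self (2 - e); linarith
  have hx1 : 1 ≤ (P + Q) / 4 := by linarith
  refine ⟨hS, by rw [cosh_arcoshR hx1]; ring, ?_⟩
  -- spectral radius part
  set b : ℂ := (e : ℂ) - Complex.I * lam with hbdef
  obtain ⟨s₀, hs₀⟩ := IsAlgClosed.exists_pow_nat_eq (b ^ 2 - 4) (by norm_num : 0 < 2)
  obtain ⟨s, hs, hord⟩ : ∃ s : ℂ, s ^ 2 = b ^ 2 - 4 ∧ ‖(b - s) / 2‖ ≤ ‖(b + s) / 2‖ := by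
    rcases le_total ‖(b - s₀) / 2‖ ‖(b + s₀) / 2‖ with h | h
    · exact ⟨s₀, hs₀, h⟩
    · exact ⟨-s₀, by rw [neg_pow]; simpa using hs₀, by
        simpa [sub_neg_eq_add, ← sub_eq_add_neg] using h⟩
  set z₁ : ℂ := (b + s) / 2 with hz₁
  set z₂ : ℂ := (b - s) / 2 with hz₂
  have hsum : z₁ + z₂ = b := by rw [hz₁, hz₂]; ring
  have hprod : z₁ * z₂ = 1 := by rw [hz₁, hz₂]; linear_combination -hs / 4
  rw [sr_eq b z₁ z₂ hsum hprod hord]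
  congr 1
  -- now: ‖z₁‖ = exp (arcoshR ((P+Q)/4))
  set ρ := ‖z₁‖ with hρ
  set τ := ‖z₂‖ with hτ
  have hρ0 : 0 ≤ ρ := norm_nonneg _
  have hτ0 : 0 ≤ τ := norm_nonneg _
  have hρτ : ρ * τ = 1 := by rw [hρ, hτ, ← norm_mul, hprod, norm_one]
  -- norms of b ± 2
  have hbp : ‖b + 2‖ = P := by
    have : ((2 + e) ^ 2 + lam ^ 2) = ‖b + 2‖ ^ 2 := by
      rw [normc_sq]; simp [hbdef]; try ring
    rw [hPdef, this, Real.sqrt_sq (norm_nonneg _)]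
  have hbm : ‖b - 2‖ = Q := by
    have : ((2 - e) ^ 2 + lam ^ 2) = ‖b - 2‖ ^ 2 := by
      rw [normc_sq]; simp [hbdef]; try ring
    rw [hQdef, this, Real.sqrt_sq (norm_nonneg _)]
  have hb2 : ‖b‖ ^ 2 = e ^ 2 + lam ^ 2 := by
    rw [normc_sq]; simp [hbdef]; try ring
  have hs2 : ‖s‖ ^ 2 = P * Q := by
    rw [← hbp, ← hbm, ← norm_mul, ← norm_pow, hs]
    congr 1; ring
  -- parallelogram
  have hpar : ‖z₁ + z₂‖ ^ 2 + ‖z₁ - z₂‖ ^ 2 = 2 * ρ ^ 2 + 2 * τ ^ 2 := parallelogramC z₁ z₂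
  have hz12 : z₁ - z₂ = s := by rw [hz₁, hz₂]; ring
  rw [hsum, hz12, hb2, hs2] at hpar
  have hsumρτ : ρ + τ = (P + Q) / 2 := by
    have hsq : (ρ + τ) ^ 2 = ((P + Q) / 2) ^ 2 := by
      linear_combination -hpar/2 + 2*hρτ - hP2/4 - hQ2/4
    have h := Real.sqrt_sq (by positivity : (0:ℝ) ≤ ρ + τ)
    rw [← h, hsq, Real.sqrt_sq (by positivity)]
  have hleρ : τ ≤ ρ := hord
  have hρ1 : 1 ≤ ρ := by nlinarith [hρτ, hleρ, hρ0, hτ0]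
  set x := (P + Q) / 4 with hxdef
  have hx : x = (ρ + τ) / 2 := by rw [hxdef, hsumρτ]; ring
  have hsq1 : x ^ 2 - 1 = ((ρ - τ) / 2) ^ 2 := by rw [hx]; linear_combination hρτ
  have hsqrt : Real.sqrt (x ^ 2 - 1) = (ρ - τ) / 2 := by
    rw [hsq1, Real.sqrt_sq (by linarith)]
  rw [arcoshR, hsqrt, Real.exp_log (by nlinarith [hρτ, hleρ, hρ0, hτ0, hρ1])]
  rw [hx]; ring
end

section
/- Let α be irrational with continued fraction denominators qₙ. The set S₁ = {θ ∈ ℝ : eventually in n, there exists 0 ≤ j ≤ qₙ−1 with ‖θ − 1/2 + j/qₙ‖_{ℝ/ℤ} < 10/q_{n+1}} is dense in ℝ. -/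
lemma distToInt_le_abs_sub (x : ℝ) (ℓ : ℤ) : distToInt x ≤ |x - ℓ| := by
  rw [distToInt, UnitAddCircle.norm_eq]
  rcases eq_or_ne ℓ (round x) with h | h
  · rw [h]
  · have h1 : (1 : ℝ) ≤ |(round x : ℝ) - ℓ| := by
      have : round x ≠ ℓ := fun e => h e.symm
      have := Int.one_le_abs (sub_ne_zero.mpr this)
      calc (1:ℝ) ≤ |((round x - ℓ : ℤ) : ℝ)| := by exact_mod_cast this
        _ = |(round x : ℝ) - ℓ| := by push_cast; ring_nf
    have h2 : |x - round x| ≤ 1/2 := abs_sub_round x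
    have h3 : |(round x : ℝ) - ℓ| ≤ |x - round x| + |x - ℓ| := by
      calc |(round x : ℝ) - ℓ| = |(round x - x) + (x - ℓ)| := by ring_nf
      _ ≤ |(round x : ℝ) - x| + |x - ℓ| := abs_add_le _ _
      _ = |x - round x| + |x - ℓ| := by rw [abs_sub_comm]
    linarith

lemma nums_int (α : ℝ) (hα : Irrational α) :
    ∀ n, (∃ p : ℤ, (GenContFract.of α).nums n = (p : ℝ)) := by
  have hnt : ∀ n, ¬ (GenContFract.of α).TerminatedAt n := by
    intro n h
    rcases (GenContFract.terminates_iff_rat α).mp ⟨n, h⟩ with ⟨r, hr⟩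
    exact hα ⟨r, hr.symm⟩
  have hs : ∀ n, ∃ gp, (GenContFract.of α).s.get? n = some gp := by
    intro n
    exact Option.ne_none_iff_exists'.1 (hnt n)
  have key : ∀ n, (∃ p : ℤ, (GenContFract.of α).nums n = (p : ℝ)) ∧
      (∃ p : ℤ, (GenContFract.of α).nums (n+1) = (p : ℝ)) := by
    intro n
    induction n with
    | zero =>
      constructor
      · exact ⟨⌊α⌋, by rw [GenContFract.zeroth_num_eq_h, GenContFract.of_h_eq_floor]⟩
      · obtain ⟨gp, hgp⟩ := hs 0
        obtain ⟨ha, z, hz⟩ := GenContFract.of_partNum_eq_one_and_exists_int_partDen_eq hgp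
        refine ⟨z * ⌊α⌋ + 1, ?_⟩
        rw [GenContFract.first_num_eq hgp, ha, hz, GenContFract.of_h_eq_floor]
        push_cast; ring
    | succ n ih =>
      obtain ⟨⟨p0, hp0⟩, p1, hp1⟩ := ih
      refine ⟨⟨p1, hp1⟩, ?_⟩
      obtain ⟨gp, hgp⟩ := hs (n+1)
      obtain ⟨ha, z, hz⟩ := GenContFract.of_partNum_eq_one_and_exists_int_partDen_eq hgp
      refine ⟨z * p1 + p0, ?_⟩
      rw [GenContFract.nums_recurrence hgp hp0 hp1, ha, hz]
      push_cast; ring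
  exact fun n => (key n).1

/-- For irrational `α` with continued fraction denominators `qₙ`, the set
`S₁ = {θ : eventually in n, ∃ 0 ≤ j ≤ qₙ−1, ‖θ − 1/2 + j/qₙ‖_{ℝ/ℤ} < 10/q_{n+1}}`
is dense in `ℝ`. -/
theorem stmt17 (α : ℝ) (hα : Irrational α) (q : ℕ → ℕ)
    (hq : ∀ n, (q n : ℝ) = (GenContFract.of α).dens n) :
    Dense {θ : ℝ | ∀ᶠ n in Filter.atTop, ∃ j : ℕ, j ≤ q n - 1 ∧
      distToInt (θ - 1/2 + (j : ℝ) / (q n : ℝ)) < 10 / (q (n+1) : ℝ)} := by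
  classical
  set g := GenContFract.of α with hg
  have hnt : ∀ n, ¬ g.TerminatedAt n := by
    intro n h
    rcases (GenContFract.terminates_iff_rat α).mp ⟨n, h⟩ with ⟨r, hr⟩
    exact hα ⟨r, hr.symm⟩
  -- fibonacci lower bound on q
  have hfib : ∀ n, Nat.fib (n+1) ≤ q n := by
    intro n
    have h := GenContFract.succ_nth_fib_le_of_nth_den (v := α) (n := n)
      (Or.inr (hnt _))
    rw [← hq n] at h
    exact_mod_cast h
  have hq1 : ∀ n, 1 ≤ q n := fun n =>
    le_trans (Nat.fib_pos.mpr (Nat.succ_pos n)) (hfib n)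
  have hqpos : ∀ n, (0:ℝ) < (q n : ℝ) := fun n => by exact_mod_cast hq1 n
  -- the dense subgroup
  set S : AddSubgroup ℝ := AddSubgroup.closure {(1:ℝ), α} with hS
  have hdense : Dense (S : Set ℝ) := by
    rcases S.dense_or_cyclic with h | ⟨a, ha⟩
    · exact h
    · exfalso
      have h1 : (1:ℝ) ∈ S := AddSubgroup.subset_closure (by simp)
      have h2 : α ∈ S := AddSubgroup.subset_closure (by simp)
      rw [ha, AddSubgroup.mem_closure_singleton] at h1 h2
      obtain ⟨n, hn⟩ := h1
      obtain ⟨m, hm⟩ := h2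
      have hn0 : n ≠ 0 := by rintro rfl; simp at hn
      apply hα
      refine ⟨(m : ℚ) / (n : ℚ), ?_⟩
      have hnR : (n:ℝ) ≠ 0 := by exact_mod_cast hn0
      push_cast
      rw [div_eq_iff hnR]
      rw [zsmul_eq_mul] at hn hm
      have : a = 1 / n := by field_simp at hn ⊢; linarith [hn]
      rw [this] at hm
      field_simp at hm
      linarith [hm]
  -- image under translation
  have hdense2 : Dense ((fun x => x + 1/2) '' (S : Set ℝ)) := by
    have hsurj : Function.Surjective (fun x : ℝ => x + 1/2) :=
      fun y => ⟨y - 1/2, by ring⟩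
    exact hsurj.denseRange.dense_image (by continuity) hdense
  refine hdense2.mono ?_
  rintro θ ⟨s, hsS, rfl⟩
  -- write s = m + k • α
  have : s ∈ AddSubgroup.closure ({(1:ℝ)} ∪ {α}) := by
    rw [Set.singleton_union]; exact hsS
  rw [AddSubgroup.closure_union, AddSubgroup.mem_sup] at this
  obtain ⟨y, hy, z, hz, rfl⟩ := this
  rw [AddSubgroup.mem_closure_singleton] at hy hz
  obtain ⟨m, rfl⟩ := hy
  obtain ⟨k, rfl⟩ := hz
  rw [Set.mem_setOf_eq]
  -- eventually q n ≥ |k|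
  have hev : ∀ᶠ n in Filter.atTop, k.natAbs ≤ q n := by
    rw [Filter.eventually_atTop]
    refine ⟨k.natAbs + 4, fun n hn => ?_⟩
    calc k.natAbs ≤ n + 1 := by omega
    _ ≤ Nat.fib (n+1) := Nat.le_fib_self (by omega)
    _ ≤ q n := hfib n
  filter_upwards [hev] with n hkn
  obtain ⟨p, hp⟩ := nums_int α hα n
  -- j := (-k * p) mod q n
  set j : ℕ := ((-k * p) % (q n : ℤ)).toNat with hj
  have hqZ : (0:ℤ) < (q n : ℤ) := by exact_mod_cast hq1 n
  have hjlt : (j : ℤ) < (q n : ℤ) := by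
    rw [hj, Int.toNat_of_nonneg (Int.emod_nonneg _ hqZ.ne')]
    exact Int.emod_lt_of_pos _ hqZ
  have hjle : j ≤ q n - 1 := by
    have : j < q n := by exact_mod_cast hjlt
    omega
  refine ⟨j, hjle, ?_⟩
  -- the integer t
  set t : ℤ := (-k * p) / (q n : ℤ) with ht
  have hjeq : (j : ℤ) = -k * p - (q n : ℤ) * t := by
    rw [hj, Int.toNat_of_nonneg (Int.emod_nonneg _ hqZ.ne'), Int.emod_def]
  have hjR : (j : ℝ) = -(k:ℝ) * p - (q n : ℝ) * t := by exact_mod_cast hjeq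
  -- approximation inequality
  have happrox : |α - (p : ℝ) / (q n : ℝ)| ≤ 1 / ((q n : ℝ) * (q (n+1) : ℝ)) := by
    have h := GenContFract.abs_sub_convs_le (v := α) (n := n) (hnt n)
    rw [GenContFract.conv_eq_num_div_den, hp, ← hq n, ← hq (n+1)] at h
    exact h
  -- compute the value
  have hval : m • (1:ℝ) + k • α + 1/2 - 1/2 + (j : ℝ) / (q n : ℝ)
      = ((m - t : ℤ) : ℝ) + (k:ℝ) * (α - (p:ℝ)/(q n : ℝ)) := by
    simp only [zsmul_eq_mul]
    rw [hjR]
    have := (hqpos n).ne'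
    push_cast
    field_simp
    ring
  rw [hval]
  have hbound : distToInt (((m - t : ℤ) : ℝ) + (k:ℝ) * (α - (p:ℝ)/(q n : ℝ)))
      ≤ |(k:ℝ)| * |α - (p:ℝ)/(q n : ℝ)| := by
    have h := distToInt_le_abs_sub (((m - t : ℤ) : ℝ) + (k:ℝ) * (α - (p:ℝ)/(q n : ℝ))) (m - t)
    calc distToInt _ ≤ |((m - t : ℤ) : ℝ) + (k:ℝ) * (α - (p:ℝ)/(q n : ℝ)) - ((m - t : ℤ) : ℝ)| := h
      _ = |(k:ℝ) * (α - (p:ℝ)/(q n : ℝ))| := by ring_nf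
      _ = |(k:ℝ)| * |α - (p:ℝ)/(q n : ℝ)| := abs_mul _ _
  have hq1pos : (0:ℝ) < (q (n+1) : ℝ) := hqpos (n+1)
  have hkq : |(k:ℝ)| ≤ (q n : ℝ) := by
    have : (k.natAbs : ℝ) ≤ (q n : ℝ) := by exact_mod_cast hkn
    rwa [Nat.cast_natAbs, Int.cast_abs] at this
  calc distToInt _ ≤ |(k:ℝ)| * |α - (p:ℝ)/(q n : ℝ)| := hbound
    _ ≤ (q n : ℝ) * (1 / ((q n : ℝ) * (q (n+1) : ℝ))) := by
        apply mul_le_mul hkq happrox (abs_nonneg _) (le_of_lt (hqpos n))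
    _ = 1 / (q (n+1) : ℝ) := by
        rw [mul_one_div]
        rw [div_eq_div_iff (mul_pos (hqpos n) hq1pos).ne' hq1pos.ne']
        ring
    _ < 10 / (q (n+1) : ℝ) := by
        have := hq1pos
        gcongr
        norm_num
end
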